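/- arXiv:1606.01796 — 6 statements merged into one kernel-verified Lean document; each statement's English description precedes it below -/
import Mathlib

section
/- Let D : ℤ[T, T^{-1}] → ℤ[T, T^{-1}] be the ℤ-linear endomorphism of the ring of Laurent polynomials over ℤ determined by D(T^n) = n·T^{n-1} for all n ∈ ℤ. Then the cokernel of D is isomorphic, as an abelian group (equivalently, as a ℤ-module), to ℤ ⊕ ⨁_{n ∈ ℤ, n ≠ -1} ℤ/(n+1)ℤ. -/
/-!
Identify `ℤ[T,T⁻¹]` with `ℤ →₀ ℤ` through the coefficients. Since `D(c Tⁿ) = n c Tⁿ⁻¹`,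
the coefficient of `Tᵐ` in `D p` is `(m + 1)` times that of `Tᵐ⁺¹` in `p`, so the range of `D`
is exactly the set of Laurent polynomials whose `m`-th coefficient is divisible by `m + 1`.
The cokernel is therefore `⨁ₘ ℤ/(m + 1)ℤ`, and the summand `m = -1` is `ℤ/0ℤ = ℤ`.
-/

open DirectSum

noncomputable def DirectSum.addEquivProdOfNe {ι : Type*} [DecidableEq ι] (β : ι → Type*)
    [∀ i, AddCommMonoid (β i)] (a : ι) :
    (⨁ i, β i) ≃+ β a × ⨁ i : {i // i ≠ a}, β i :=
  (DirectSum.equivCongrLeft (Equiv.optionSubtypeNe a).symm).trans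
    (DirectSum.addEquivProdDirectSum (α := fun o => β (Equiv.optionSubtypeNe a o)))

namespace Finsupp

variable {ι G : Type*} [DecidableEq ι] [AddCommGroup G] (H : ι → AddSubgroup G)

open Classical in
noncomputable def quotientMk : (ι →₀ G) →+ ⨁ i, G ⧸ H i :=
  (DFinsupp.mapRange.addMonoidHom fun i => QuotientAddGroup.mk' (H i)).comp
    finsuppAddEquivDFinsupp.toAddMonoidHom

@[simp]
lemma quotientMk_apply (f : ι →₀ G) (i : ι) : quotientMk H f i = f i := rfl

open Classical in
lemma quotientMk_surjective : Function.Surjective (quotientMk H) :=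
  ((DFinsupp.mapRange_surjective _ fun _ => map_zero _).2
    fun i => QuotientAddGroup.mk'_surjective (H i)).comp finsuppAddEquivDFinsupp.surjective

lemma mem_ker_quotientMk {f : ι →₀ G} : f ∈ (quotientMk H).ker ↔ ∀ i, f i ∈ H i := by
  simp only [AddMonoidHom.mem_ker, DirectSum.ext_iff, quotientMk_apply, DirectSum.zero_apply,
    QuotientAddGroup.eq_zero_iff]

end Finsupp

namespace LaurentPolynomial

lemma single_eq_smul_T {R : Type*} [Semiring R] (n : ℤ) (r : R) :
    (.single n r : R[T;T⁻¹]) = r • T n := by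
  rw [T, AddMonoidAlgebra.smul_single', mul_one]

lemma coeff_apply_of_map_T {D : ℤ[T;T⁻¹] →ₗ[ℤ] ℤ[T;T⁻¹]}
    (hD : ∀ n : ℤ, D (T n) = n • T (n - 1)) (p : ℤ[T;T⁻¹]) (m : ℤ) :
    (D p).coeff m = (m + 1) * p.coeff (m + 1) := by
  induction p using LaurentPolynomial.induction_on' with
  | add p q hp hq => simp [hp, hq, mul_add]
  | C_mul_T n a =>
    rw [← smul_eq_C_mul, map_smul, hD]
    simp only [AddMonoidAlgebra.coeff_smul, Finsupp.smul_apply, T_apply, smul_eq_mul]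
    by_cases h : n = m + 1
    · simp [h, mul_comm]
    · simp [h, sub_eq_iff_eq_add]

lemma mem_range_iff_dvd_coeff {D : ℤ[T;T⁻¹] →ₗ[ℤ] ℤ[T;T⁻¹]}
    (hD : ∀ n : ℤ, D (T n) = n • T (n - 1)) {p : ℤ[T;T⁻¹]} :
    p ∈ LinearMap.range D ↔ ∀ m : ℤ, m + 1 ∣ p.coeff m := by
  constructor
  · rintro ⟨q, rfl⟩ m
    exact ⟨q.coeff (m + 1), coeff_apply_of_map_T hD q m⟩
  · intro hp
    rw [← p.sum_coeff_single]
    refine Submodule.finsuppSum_mem _ _ _ _ fun m _ => ?_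
    obtain ⟨k, hk⟩ := hp m
    refine ⟨k • T (m + 1), ?_⟩
    rw [map_smul, hD, add_sub_cancel_right, smul_smul, single_eq_smul_T, hk, mul_comm]

end LaurentPolynomial

open LaurentPolynomial

/-- Let `D` be the ℤ-linear endomorphism of the ring of Laurent polynomials
`ℤ[T,T⁻¹]` determined by `D(Tⁿ) = n·Tⁿ⁻¹` for all `n ∈ ℤ` (the algebraic de Rham differential
of `𝔾ₘ` over `ℤ`, in the basis `dT`). Then the cokernel of `D` is isomorphic as an abelian
group to `ℤ ⊕ ⨁_{n ∈ ℤ, n ≠ -1} ℤ/(n+1)ℤ`. -/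
theorem coker_deRham_Gm
    (D : LaurentPolynomial ℤ →ₗ[ℤ] LaurentPolynomial ℤ)
    (hD : ∀ n : ℤ, D (LaurentPolynomial.T n) = n • LaurentPolynomial.T (n - 1)) :
    Nonempty ((LaurentPolynomial ℤ ⧸ LinearMap.range D) ≃+
      (ℤ × ⨁ (n : {m : ℤ // m ≠ -1}), ℤ ⧸ AddSubgroup.zmultiples ((n : ℤ) + 1))) := by
  let ψ := (Finsupp.quotientMk fun m : ℤ => AddSubgroup.zmultiples (m + 1)).comp
    AddMonoidAlgebra.coeffAddEquiv.toAddMonoidHom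
  have hψ : Function.Surjective ψ :=
    (Finsupp.quotientMk_surjective _).comp AddMonoidAlgebra.coeffAddEquiv.surjective
  have hker : (LinearMap.range D).toAddSubgroup = ψ.ker := by
    ext p
    calc p ∈ LinearMap.range D ↔ ∀ m : ℤ, m + 1 ∣ p.coeff m := mem_range_iff_dvd_coeff hD
      _ ↔ p.coeff ∈ (Finsupp.quotientMk _).ker := by
        simp only [Finsupp.mem_ker_quotientMk, Int.mem_zmultiples_iff]
  have hfree : (ℤ ⧸ AddSubgroup.zmultiples ((-1 : ℤ) + 1)) ≃+ ℤ :=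
    (QuotientAddGroup.quotientAddEquivOfEq (by simp)).trans QuotientAddGroup.quotientBot
  exact ⟨((QuotientAddGroup.quotientAddEquivOfEq hker).trans
    (QuotientAddGroup.quotientKerEquivOfSurjective ψ hψ)).trans
    ((DirectSum.addEquivProdOfNe _ (-1)).trans (hfree.prodCongr (AddEquiv.refl _)))⟩
end

section
/- Let R be an integral domain, p a prime number, and ζ ∈ R a primitive p-th root of unity (in the sense of Mathlib's IsPrimitiveRoot ζ p). For n ≥ 0 set [n]_ζ := 1 + ζ + ζ^2 + ⋯ + ζ^{n−1} ∈ R. Let ∇ be the R-linear endomorphism of the polynomial ring R[T] determined by ∇(T^n) = [n]_ζ·T^{n−1} for n ≥ 1 and ∇(1) = 0. Then the kernel of ∇ consists exactly of the polynomials f ∈ R[T] all of whose coefficients in degrees not divisible by p vanish; equivalently, ker ∇ is the image of the R-algebra endomorphism of R[T] sending T to T^p. -/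
open Polynomial

lemma geom_sum_eq_zero_iff_dvd {R : Type*} [CommRing R] [IsDomain R] {p : ℕ} (hp : p.Prime)
    {ζ : R} (hζ : IsPrimitiveRoot ζ p) (n : ℕ) :
    (∑ k ∈ Finset.range n, ζ ^ k) = 0 ↔ p ∣ n := by
  have hζ1 : ζ ≠ 1 := by
    intro h
    have := hζ.dvd_of_pow_eq_one 1 (by simp [h])
    have h2 := Nat.le_of_dvd one_pos this
    have h3 := hp.one_lt
    omega
  have hsub : ζ - 1 ≠ 0 := sub_ne_zero.mpr hζ1
  have key : (∑ k ∈ Finset.range n, ζ ^ k) * (ζ - 1) = ζ ^ n - 1 := geom_sum_mul ζ n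
  constructor
  · intro h
    have : ζ ^ n - 1 = 0 := by rw [← key, h, zero_mul]
    exact (hζ.pow_eq_one_iff_dvd n).mp (sub_eq_zero.mp this)
  · intro h
    have : ζ ^ n = 1 := (hζ.pow_eq_one_iff_dvd n).mpr h
    have h0 : (∑ k ∈ Finset.range n, ζ ^ k) * (ζ - 1) = 0 := by rw [key, this, sub_self]
    exact (mul_eq_zero.mp h0).resolve_right hsub

lemma nabla_coeff {R : Type*} [CommRing R] (ζ : R)
    (nabla : Polynomial R →ₗ[R] Polynomial R)
    (hnabla : ∀ n : ℕ, nabla (Polynomial.X ^ n) =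
      (∑ k ∈ Finset.range n, ζ ^ k) • Polynomial.X ^ (n - 1))
    (f : Polynomial R) (m : ℕ) :
    (nabla f).coeff m = (∑ k ∈ Finset.range (m + 1), ζ ^ k) * f.coeff (m + 1) := by
  induction f using Polynomial.induction_on' with
  | add f g hf hg =>
    simp [map_add, coeff_add, hf, hg, mul_add]
  | monomial n a =>
    rw [← Polynomial.smul_X_eq_monomial, map_smul, hnabla n]
    rcases eq_or_ne n (m + 1) with rfl | hne
    · simp [mul_comm]
    · rcases Nat.eq_zero_or_pos n with rfl | hn
      · simp [Polynomial.coeff_one, (by omega : m + 1 ≠ 0)]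
      · have h1 : m ≠ n - 1 := fun h => hne (by omega)
        have h2 : m + 1 ≠ n := fun h => hne h.symm
        simp [Polynomial.coeff_smul, Polynomial.coeff_X_pow, h1, h2]

/-- Let `R` be an integral domain, `p` a prime, `ζ ∈ R` a primitive `p`-th
root of unity, and `[n]_ζ := 1 + ζ + ⋯ + ζ^{n-1}`. Let `nabla` be the `R`-linear endomorphism
of `R[T]` with `nabla(Tⁿ) = [n]_ζ·Tⁿ⁻¹` (so `nabla(1) = 0`). Then the kernel of `nabla` consists
exactly of the polynomials whose coefficients in degrees not divisible by `p` vanish;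
equivalently, it is the image of the `R`-algebra endomorphism of `R[T]` sending `T` to
`T^p`. -/
theorem ker_q_derivative_at_root_of_unity
    (R : Type*) [CommRing R] [IsDomain R] (p : ℕ) (hp : p.Prime)
    (ζ : R) (hζ : IsPrimitiveRoot ζ p)
    (nabla : Polynomial R →ₗ[R] Polynomial R)
    (hnabla : ∀ n : ℕ, nabla (Polynomial.X ^ n) =
      (∑ k ∈ Finset.range n, ζ ^ k) • Polynomial.X ^ (n - 1)) :
    (∀ f : Polynomial R,
      f ∈ LinearMap.ker nabla ↔ ∀ n : ℕ, ¬ p ∣ n → f.coeff n = 0) ∧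
    (∀ f : Polynomial R,
      f ∈ LinearMap.ker nabla ↔ ∃ g : Polynomial R, Polynomial.expand R p g = f) := by
  have main : ∀ f : Polynomial R,
      f ∈ LinearMap.ker nabla ↔ ∀ n : ℕ, ¬ p ∣ n → f.coeff n = 0 := by
    intro f
    rw [LinearMap.mem_ker]
    constructor
    · intro h n hn
      have hn0 : n ≠ 0 := fun h0 => hn (h0 ▸ dvd_zero p)
      have := nabla_coeff ζ nabla hnabla f (n - 1)
      rw [h, Polynomial.coeff_zero, (by omega : n - 1 + 1 = n)] at this
      rcases mul_eq_zero.mp this.symm with h' | h'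
      · exact absurd ((geom_sum_eq_zero_iff_dvd hp hζ n).mp h') hn
      · exact h'
    · intro h
      ext m
      rw [nabla_coeff ζ nabla hnabla f m, Polynomial.coeff_zero]
      by_cases hd : p ∣ (m + 1)
      · rw [(geom_sum_eq_zero_iff_dvd hp hζ (m + 1)).mpr hd, zero_mul]
      · rw [h _ hd, mul_zero]
  refine ⟨main, fun f => (main f).trans ?_⟩
  constructor
  · intro h
    refine ⟨Polynomial.contract p f, ?_⟩
    ext n
    rw [Polynomial.coeff_expand hp.pos, Polynomial.coeff_contract hp.ne_zero]
    split_ifs with hd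
    · rw [Nat.div_mul_cancel hd]
    · exact (h n hd).symm
  · rintro ⟨g, rfl⟩ n hn
    rw [Polynomial.coeff_expand hp.pos, if_neg hn]
end

section
/- Let p be a prime number, K the p-th cyclotomic field (CyclotomicField p ℚ), 𝓞 its ring of integers, and ζ ∈ 𝓞 a primitive p-th root of unity. For n ∈ ℤ set [n]_ζ := (ζ^n − 1)/(ζ − 1) ∈ 𝓞, which is well defined since ζ is a unit and ζ − 1 divides ζ^n − 1 for every n ∈ ℤ (for n ≥ 0, [n]_ζ = 1 + ζ + ⋯ + ζ^{n−1}). Let ∇ be the 𝓞-linear endomorphism of the module 𝓞[T, T^{-1}] of Laurent polynomials over 𝓞 determined by ∇(T^n) = [n]_ζ·T^{n−1} for all n ∈ ℤ. Then the cokernel of ∇ is a free 𝓞-module with basis given by the classes of the monomials T^{pk−1} for k ∈ ℤ. -/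
/-!
Since `ζ` has order `p`, the element `[n]_ζ` vanishes when `p ∣ n`, and otherwise `ζⁿ - 1` is
associated to `ζ - 1`, so `[n]_ζ` is a unit. Hence `∇` kills `Tⁿ` when `p ∣ n` and maps it to a
unit multiple of `Tⁿ⁻¹` when `p ∤ n`: its range is the span of the monomials `Tᵐ` with
`p ∤ m + 1`, and the remaining monomials `T^{pk-1}` give a basis of the cokernel.
-/

namespace AddMonoidAlgebra

theorem disjoint_supported_supported {R S M : Type*} [Semiring R] [Semiring S] [Module R S]
    {s t : Set M} (h : Disjoint s t) :
    Disjoint (supported R S s) (supported R S t) := by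
  rw [Submodule.disjoint_def]
  intro x hs ht
  ext m
  by_cases hm : m ∈ s
  · exact (mem_supported'.mp ht) m (h.notMem_of_mem_left hm)
  · exact (mem_supported'.mp hs) m hm

end AddMonoidAlgebra

namespace IsPrimitiveRoot

variable {A : Type*} [CommRing A] [IsDomain A] {p : ℕ} {u : Aˣ} {b : A} {n : ℤ}

theorem qInteger_eq_zero_of_dvd (hu : IsPrimitiveRoot (u : A) p) (hp : 1 < p)
    (hb : b * (u - 1) = (u ^ n : Aˣ) - 1) (hn : (p : ℤ) ∣ n) : b = 0 := by
  rw [((coe_units_iff.mp hu).zpow_eq_one_iff_dvd n).mpr hn, Units.val_one, sub_self] at hb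
  exact (mul_eq_zero.mp hb).resolve_right (sub_ne_zero.mpr (hu.ne_one hp))

theorem isUnit_qInteger_of_not_dvd (hu : IsPrimitiveRoot (u : A) p) (hp : p.Prime)
    (hb : b * (u - 1) = (u ^ n : Aˣ) - 1) (hn : ¬ (p : ℤ) ∣ n) : IsUnit b := by
  have hη : ((u ^ n : Aˣ) : A) ∈ Polynomial.nthRootsFinset p (1 : A) := by
    rw [Polynomial.mem_nthRootsFinset hp.pos, ← Units.val_pow_eq_pow_val, ← zpow_natCast,
      ← zpow_mul, mul_comm, zpow_mul, zpow_natCast, (coe_units_iff.mp hu).pow_eq_one, one_zpow,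
      Units.val_one]
  have hη1 : ((u ^ n : Aˣ) : A) ≠ 1 := by
    rw [Ne, Units.val_eq_one, (coe_units_iff.mp hu).zpow_eq_one_iff_dvd]
    exact hn
  obtain ⟨v, hv⟩ := hu.nthRootsFinset_pairwise_associated_sub_one_sub_of_prime hp hη
    (Polynomial.one_mem_nthRootsFinset hp.pos) hη1
  have hbv : (u - 1 : A) * b = (u - 1) * v := by rw [hv, ← hb, mul_comm]
  exact (mul_left_cancel₀ (sub_ne_zero.mpr (hu.ne_one hp.one_lt)) hbv) ▸ v.isUnit

end IsPrimitiveRoot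

namespace LaurentPolynomial

open AddMonoidAlgebra

variable {O : Type*} [CommRing O] {b : ℤ → O} {nabla : O[T;T⁻¹] →ₗ[O] O[T;T⁻¹]} {p : ℤ}

theorem range_le_supported_of_map_T (hnabla : ∀ n : ℤ, nabla (T n) = b n • T (n - 1)) :
    LinearMap.range nabla ≤ supported O O {m | b (m + 1) ≠ 0} := by
  rw [LinearMap.range_eq_map, ← (AddMonoidAlgebra.basis ℤ O).span_eq, Submodule.map_span,
    Submodule.span_le]
  rintro _ ⟨_, ⟨n, rfl⟩, rfl⟩
  rw [AddMonoidAlgebra.basis_apply, ← T, hnabla, T, smul_single', mul_one]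
  by_cases hn : b n = 0
  · rw [hn, single_zero]
    exact Submodule.zero_mem _
  · exact Finsupp.single_mem_supported O _ (by simpa using hn)

theorem T_mem_range_of_isUnit (hnabla : ∀ n : ℤ, nabla (T n) = b n • T (n - 1)) {m : ℤ}
    (hm : IsUnit (b (m + 1))) : T m ∈ LinearMap.range nabla :=
  ⟨hm.unit⁻¹.val • T (m + 1), by
    rw [map_smul, hnabla, add_sub_cancel_right, smul_smul, IsUnit.val_inv_mul, one_smul]⟩

theorem top_le_span_mk_T_mul_sub_one (hnabla : ∀ n : ℤ, nabla (T n) = b n • T (n - 1))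
    (hbu : ∀ n : ℤ, ¬ p ∣ n → IsUnit (b n)) :
    ⊤ ≤ Submodule.span O (Set.range fun k : ℤ ↦
      (Submodule.Quotient.mk (T (p * k - 1)) : O[T;T⁻¹] ⧸ LinearMap.range nabla)) := by
  rw [← Submodule.range_mkQ, LinearMap.range_eq_map (Submodule.mkQ _),
    ← (AddMonoidAlgebra.basis ℤ O).span_eq, Submodule.map_span, Submodule.span_le]
  rintro _ ⟨_, ⟨n, rfl⟩, rfl⟩
  rw [AddMonoidAlgebra.basis_apply, ← T]
  by_cases hn : p ∣ n + 1
  · obtain ⟨k, hk⟩ := hn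
    exact Submodule.subset_span ⟨k, by simp [← hk]⟩
  · rw [Submodule.mkQ_apply, (Submodule.Quotient.mk_eq_zero _).mpr
      (T_mem_range_of_isUnit hnabla (hbu _ hn))]
    exact Submodule.zero_mem _

theorem linearIndependent_mk_T_mul_sub_one (hp : p ≠ 0)
    (hnabla : ∀ n : ℤ, nabla (T n) = b n • T (n - 1)) (hb0 : ∀ n : ℤ, p ∣ n → b n = 0) :
    LinearIndependent O fun k : ℤ ↦
      (Submodule.Quotient.mk (T (p * k - 1)) : O[T;T⁻¹] ⧸ LinearMap.range nabla) := by
  have hinj : Function.Injective fun k : ℤ ↦ p * k - 1 := fun k l hkl ↦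
    mul_left_cancel₀ hp (sub_left_injective hkl)
  refine ((AddMonoidAlgebra.basis ℤ O).linearIndependent.comp _ hinj).map
    (f := (LinearMap.range nabla).mkQ) ?_
  rw [Submodule.ker_mkQ]
  -- the monomials `T (p * k - 1)` and the range of `nabla` live on disjoint sets of exponents
  refine (disjoint_supported_supported (s := {m | p ∣ m + 1}) (t := {m | b (m + 1) ≠ 0}) ?_).mono
    ?_ (range_le_supported_of_map_T hnabla)
  · exact Set.disjoint_left.mpr fun m hm hm' ↦ hm' (hb0 _ hm)
  · rw [Submodule.span_le]
    rintro _ ⟨k, rfl⟩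
    exact Finsupp.single_mem_supported O _ (by simp)

noncomputable def cokernelBasis (hp : p ≠ 0) (hnabla : ∀ n : ℤ, nabla (T n) = b n • T (n - 1))
    (hb0 : ∀ n : ℤ, p ∣ n → b n = 0) (hbu : ∀ n : ℤ, ¬ p ∣ n → IsUnit (b n)) :
    Module.Basis ℤ O (O[T;T⁻¹] ⧸ LinearMap.range nabla) :=
  .mk (linearIndependent_mk_T_mul_sub_one hp hnabla hb0) (top_le_span_mk_T_mul_sub_one hnabla hbu)

theorem cokernelBasis_apply (hp : p ≠ 0) (hnabla : ∀ n : ℤ, nabla (T n) = b n • T (n - 1))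
    (hb0 : ∀ n : ℤ, p ∣ n → b n = 0) (hbu : ∀ n : ℤ, ¬ p ∣ n → IsUnit (b n)) (k : ℤ) :
    cokernelBasis hp hnabla hb0 hbu k = Submodule.Quotient.mk (T (p * k - 1)) :=
  Module.Basis.mk_apply ..

end LaurentPolynomial

/-- Let `p` be a prime, `K` the `p`-th cyclotomic field over `ℚ`, `𝓞` its
ring of integers, `ζ ∈ 𝓞` a primitive `p`-th root of unity (a unit `u` of `𝓞`), and for
`n : ℤ` let `b n = [n]_ζ = (ζⁿ - 1)/(ζ - 1)`, characterized by `b n · (ζ - 1) = ζⁿ - 1`.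
Let `nabla` be the `𝓞`-linear endomorphism of the Laurent polynomials `𝓞[T,T⁻¹]` with
`nabla(Tⁿ) = [n]_ζ·Tⁿ⁻¹`. Then the cokernel of `nabla` is a free `𝓞`-module with basis
the classes of the monomials `T^{pk-1}`, `k ∈ ℤ`. -/
theorem coker_q_deRham_at_root_of_unity
    (p : ℕ) (hp : p.Prime)
    (ζ : NumberField.RingOfIntegers (CyclotomicField p ℚ))
    (hζ : IsPrimitiveRoot ζ p)
    (u : (NumberField.RingOfIntegers (CyclotomicField p ℚ))ˣ)
    (hu : (u : NumberField.RingOfIntegers (CyclotomicField p ℚ)) = ζ)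
    (b : ℤ → NumberField.RingOfIntegers (CyclotomicField p ℚ))
    (hb : ∀ n : ℤ, b n * (ζ - 1) =
      ((u ^ n : (NumberField.RingOfIntegers (CyclotomicField p ℚ))ˣ) :
        NumberField.RingOfIntegers (CyclotomicField p ℚ)) - 1)
    (nabla : LaurentPolynomial (NumberField.RingOfIntegers (CyclotomicField p ℚ))
      →ₗ[NumberField.RingOfIntegers (CyclotomicField p ℚ)]
        LaurentPolynomial (NumberField.RingOfIntegers (CyclotomicField p ℚ)))
    (hnabla : ∀ n : ℤ, nabla (LaurentPolynomial.T n) = b n • LaurentPolynomial.T (n - 1)) :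
    ∃ basis : Module.Basis ℤ (NumberField.RingOfIntegers (CyclotomicField p ℚ))
      (LaurentPolynomial (NumberField.RingOfIntegers (CyclotomicField p ℚ)) ⧸
        LinearMap.range nabla),
      ∀ k : ℤ, basis k =
        Submodule.Quotient.mk (LaurentPolynomial.T ((p : ℤ) * k - 1)) := by
  subst hu
  exact ⟨LaurentPolynomial.cokernelBasis (Int.natCast_ne_zero.mpr hp.ne_zero) hnabla
      (fun n ↦ hζ.qInteger_eq_zero_of_dvd hp.one_lt (hb n))
      (fun n ↦ hζ.isUnit_qInteger_of_not_dvd hp (hb n)),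
    LaurentPolynomial.cokernelBasis_apply _ _ _ _⟩
end

section
/- Let N be a positive integer and let ℤ[1/N] denote the localization of ℤ away from N (Localization.Away (N : ℤ)). Then the ring of formal Laurent series ℤ[1/N]((t)) (Laurent series with coefficients in ℤ[1/N], i.e. LaurentSeries over ℤ[1/N]) is an integral domain and a principal ideal ring (a principal ideal domain). -/
/-!
Every ideal of a localization is extended from its contraction, so localizations of principal
ideal rings are principal ideal rings; in particular `ℤ[1/N]` is one. By Kaplansky's criterion it
suffices to show that primes of `R((X)) = R⟦X⟧[1/X]` are principal. Such a prime is extended from a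
prime of `R⟦X⟧` not containing `X`, and a prime `Q ∌ X` of `R⟦X⟧` is generated by any `g ∈ Q`
whose constant term generates the ideal of constant terms of `Q`, since repeatedly subtracting a
multiple of `g` and dividing by `X` (allowed because `Q` is prime) converges `X`-adically.
-/

open PowerSeries

namespace IsLocalization

variable {R : Type*} (S : Type*) [CommRing R] [CommRing S] [Algebra R S]

theorem isPrincipal_of_isPrincipal_under (M : Submonoid R) [IsLocalization M S] {I : Ideal S}
    (hI : (I.under R).IsPrincipal) : I.IsPrincipal :=
  map_under M S I ▸ hI.map_ringHom _

theorem isPrincipalIdealRing (M : Submonoid R) [IsLocalization M S] [IsPrincipalIdealRing R] :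
    IsPrincipalIdealRing S :=
  ⟨fun _ => isPrincipal_of_isPrincipal_under S M (IsPrincipalIdealRing.principal _)⟩

end IsLocalization

theorem PowerSeries.isPrincipal_of_isPrime_of_X_notMem {R : Type*} [CommRing R]
    [IsPrincipalIdealRing R] {Q : Ideal R⟦X⟧} [Q.IsPrime] (hXQ : X ∉ Q) : Q.IsPrincipal := by
  obtain ⟨b, hb⟩ := (IsPrincipalIdealRing.principal (Q.map constantCoeff)).principal
  obtain ⟨T, rfl, -, hT⟩ :=
    exist_eq_span_eq_ncard_of_X_notMem hXQ hb.symm (Set.finite_singleton b)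
  obtain ⟨g, rfl⟩ := Set.ncard_eq_one.mp (hT.trans (Set.ncard_singleton b))
  exact ⟨g, rfl⟩

instance LaurentSeries.isPrincipalIdealRing {R : Type*} [CommRing R] [IsPrincipalIdealRing R] :
    IsPrincipalIdealRing (LaurentSeries R) := by
  refine IsPrincipalIdealRing.of_prime fun P hP => ?_
  refine IsLocalization.isPrincipal_of_isPrincipal_under _ (Submonoid.powers (X : R⟦X⟧)) ?_
  have hXP : X ∉ P.under R⟦X⟧ := fun hX =>
    hP.ne_top (P.eq_top_of_isUnit_mem hX
      (IsLocalization.map_units (LaurentSeries R) ⟨X, Submonoid.mem_powers _⟩))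
  exact isPrincipal_of_isPrime_of_X_notMem hXP

/-- For a positive integer `N`, the ring of formal Laurent series over
`ℤ[1/N]` is an integral domain and a principal ideal ring. -/
theorem laurentSeries_over_int_away_isPID (N : ℕ) (hN : 0 < N) :
    IsDomain (LaurentSeries (Localization.Away (N : ℤ))) ∧
    IsPrincipalIdealRing (LaurentSeries (Localization.Away (N : ℤ))) := by
  have : IsDomain (Localization.Away (N : ℤ)) :=
    IsLocalization.isDomain_localization
      (powers_le_nonZeroDivisors_of_noZeroDivisors (by exact_mod_cast hN.ne'))
  have : IsPrincipalIdealRing (Localization.Away (N : ℤ)) :=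
    IsLocalization.isPrincipalIdealRing _ (Submonoid.powers (N : ℤ))
  exact ⟨inferInstance, inferInstance⟩
end

section
/- Let A be a commutative ring, t ∈ A, and d ≥ 0 an integer. Let C and D be cochain complexes of A-modules with the same underlying modules M^i := C^i = D^i for all i, with M^i = 0 for i < 0 and for i > d, such that multiplication by t is injective on each M^i, and such that the differentials satisfy d_D^i = t·d_C^i for every i. Then the maps f^i := t^i·id : C^i → D^i form a morphism of cochain complexes f : C → D, and for every i the induced map H^i(f) : H^i(C) → H^i(D) has kernel and cokernel killed by t^d (i.e. t^d annihilates ker H^i(f) and coker H^i(f)). -/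
universe u v

/-- Let `A` be a commutative ring, `t ∈ A`, `d ≥ 0`. Let `C` and `D` be
cochain complexes of `A`-modules with the same underlying modules `M^i`, vanishing outside
degrees `0 ≤ i ≤ d`, with multiplication by `t` injective on each `M^i` and with
`d_D = t·d_C`. Then `f^i := t^i · id` is a morphism of complexes `C → D`, and for every `i`
the induced map on cohomology (here expressed elementwise at spot `i+1`, with cocycles
`x` with `d x = 0` and coboundaries the images of `d`) has kernel and cokernel killed by
`t^d`. -/
theorem pow_smul_chain_map_kernel_cokernel_killed
    {A : Type u} [CommRing A] (t : A) (d : ℕ)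
    (M : ℤ → Type v) [∀ i, AddCommGroup (M i)] [∀ i, Module A (M i)]
    (hbd : ∀ i : ℤ, (i < 0 ∨ (d : ℤ) < i) → ∀ x : M i, x = 0)
    (hinj : ∀ (i : ℤ) (x : M i), t • x = 0 → x = 0)
    (dC dD : ∀ i : ℤ, M i →ₗ[A] M (i + 1))
    (hC : ∀ (i : ℤ) (x : M i), dC (i + 1) (dC i x) = 0)
    (hD : ∀ (i : ℤ) (x : M i), dD (i + 1) (dD i x) = 0)
    (hdD : ∀ (i : ℤ) (x : M i), dD i x = t • dC i x) :
    -- the maps `f^i = t^i · id` form a morphism of cochain complexes `C → D`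
    (∀ (i : ℤ) (x : M i), t ^ ((i + 1).toNat) • dC i x = dD i (t ^ i.toNat • x)) ∧
    -- `t^d` kills the kernel of `H^i(f) : H^i(C) → H^i(D)`
    (∀ (i : ℤ) (x : M (i + 1)), dC (i + 1) x = 0 →
      (∃ w : M i, dD i w = t ^ ((i + 1).toNat) • x) →
      ∃ w : M i, dC i w = t ^ d • x) ∧
    -- `t^d` kills the cokernel of `H^i(f) : H^i(C) → H^i(D)`
    (∀ (i : ℤ) (y : M (i + 1)), dD (i + 1) y = 0 →
      ∃ (x : M (i + 1)) (w : M i),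
        dC (i + 1) x = 0 ∧ t ^ d • y = t ^ ((i + 1).toNat) • x + dD i w) := by
  refine ⟨?_, ?_, ?_⟩
  · intro i x
    by_cases hi : i < 0
    · have hx : x = 0 := hbd i (Or.inl hi) x
      subst hx
      simp
    · push_neg at hi
      have h1 : (i + 1).toNat = i.toNat + 1 := by omega
      rw [map_smul, hdD, h1, pow_succ, mul_smul]
  · rintro i x hx ⟨w, hw⟩
    by_cases hout : (i + 1) < 0 ∨ (d : ℤ) < i + 1
    · have hx0 : x = 0 := hbd _ hout x
      exact ⟨0, by simp [hx0]⟩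
    · push_neg at hout
      obtain ⟨h0, hd⟩ := hout
      by_cases hi : i < 0
      · have hw0 : w = 0 := hbd i (Or.inl hi) w
        have hi1 : (i + 1).toNat = 0 := by omega
        rw [hw0, map_zero, hi1, pow_zero, one_smul] at hw
        exact ⟨0, by simp [← hw]⟩
      · push_neg at hi
        have h1 : (i + 1).toNat = i.toNat + 1 := by omega
        rw [hdD, h1, pow_succ', mul_smul] at hw
        have key : dC i w = t ^ i.toNat • x := by
          have h2 : t • (dC i w - t ^ i.toNat • x) = 0 := by
            rw [smul_sub, hw, sub_self]
          have := hinj _ _ h2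
          rwa [sub_eq_zero] at this
        refine ⟨t ^ (d - i.toNat) • w, ?_⟩
        have he : d - i.toNat + i.toNat = d := by omega
        rw [map_smul, key, smul_smul, ← pow_add, he]
  · intro i y hy
    by_cases hout : (i + 1) < 0 ∨ (d : ℤ) < i + 1
    · have hy0 : y = 0 := hbd _ hout y
      exact ⟨0, 0, by simp, by simp [hy0]⟩
    · push_neg at hout
      obtain ⟨h0, hd⟩ := hout
      have hcy : dC (i + 1) y = 0 := hinj _ _ (by rw [← hdD, hy])
      refine ⟨t ^ (d - (i + 1).toNat) • y, 0, by rw [map_smul, hcy, smul_zero], ?_⟩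
      have he : (i + 1).toNat + (d - (i + 1).toNat) = d := by omega
      rw [map_zero, add_zero, smul_smul, ← pow_add, he]
end

section
/- Let S be a commutative ring and R a commutative S-algebra which is formally étale over S (Algebra.FormallyEtale S R). Let γ be a ring endomorphism of the power series ring S[[X]] such that γ(X) = X and such that the endomorphism of S[[X]]/(X) ≅ S induced by γ is the identity of S. Let ι : S[[X]] → R[[X]] be the coefficientwise map induced by the algebra map S → R. Then there exists a unique ring endomorphism γ̃ of R[[X]] such that γ̃ ∘ ι = ι ∘ γ and such that the endomorphism of R[[X]]/(X) ≅ R induced by γ̃ is the identity of R. -/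
/-!
An endomorphism `γ̃` of `R⟦X⟧` with `γ̃ X = X` is determined by `φ = γ̃ ∘ C : R → R⟦X⟧`: the
`k`-th coefficient of `γ̃ f` only depends on the truncation of `f` below degree `k + 1`, and
conversely every `φ` extends to such a `γ̃`. The two conditions on `γ̃` say exactly that `φ` is
compatible with `ι ∘ γ ∘ C : S → R⟦X⟧` and lifts `R → R⟦X⟧ ⧸ (X)`. Since `R⟦X⟧` is
`(X)`-adically complete, formal étaleness of `R` over `S` provides exactly one such lift.
-/

universe u

open PowerSeries

theorem Algebra.FormallyEtale.existsUnique_ringHom_lift_of_isAdicComplete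
    {S R B : Type*} [CommRing S] [CommRing R] [CommRing B] [Algebra S R]
    [Algebra.FormallyEtale S R] (I : Ideal B) [IsAdicComplete I B]
    (ψ : S →+* B) (f : R →+* B ⧸ I)
    (hf : f.comp (algebraMap S R) = (Ideal.Quotient.mk I).comp ψ) :
    ∃! g : R →+* B, g.comp (algebraMap S R) = ψ ∧ (Ideal.Quotient.mk I).comp g = f := by
  let _ : Algebra S B := ψ.toAlgebra
  let fₐ : R →ₐ[S] B ⧸ I := { f with commutes' := fun s => congr($hf s) }
  obtain ⟨g, hg⟩ := Algebra.FormallySmooth.exists_mkₐ_comp_eq_of_isAdicComplete fₐ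
  refine ⟨g, ⟨g.comp_algebraMap, congr(($hg : R →+* B ⧸ I))⟩, ?_⟩
  rintro g' ⟨hg'S, hg'I⟩
  let g'ₐ : R →ₐ[S] B := { g' with commutes' := fun s => congr($hg'S s) }
  have hI : ⨅ n, I ^ n = ⊥ := by
    simpa [smul_eq_mul, Ideal.mul_top] using
      IsHausdorff.iInf_pow_smul (inferInstance : IsHausdorff I B)
  have : g'ₐ = g := Algebra.FormallyUnramified.ext_of_iInf I hI fun r => by
    simpa [g'ₐ] using congr($hg'I r).trans congr($hg r).symm
  exact congr(($this : R →+* B))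

namespace PowerSeries

variable {A B : Type*} [CommRing A] [CommRing B]

theorem exists_ringHom_comp_C_eq_and_map_X (φ : A →+* B⟦X⟧) :
    ∃ h : A⟦X⟧ →+* B⟦X⟧, h.comp C = φ ∧ h X = X := by
  -- with discrete coefficients the product topology on `B⟦X⟧` is the `X`-adic one
  let _ : UniformSpace A := ⊥
  let _ : UniformSpace B := ⊥
  have : DiscreteTopology A := ⟨rfl⟩
  have : DiscreteTopology B := ⟨rfl⟩
  open WithPiTopology in
  exact ⟨eval₂Hom (continuous_of_discreteTopology (f := φ)) HasEval.X,
    RingHom.ext fun a => by simp [coe_eval₂Hom, eval₂_C], by simp [coe_eval₂Hom, eval₂_X]⟩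

theorem coeff_apply_eq_coeff_eval₂_trunc_of_map_X {h : A⟦X⟧ →+* B⟦X⟧} (hX : h X = X)
    (f : A⟦X⟧) (k : ℕ) :
    coeff k (h f) = coeff k ((trunc (k + 1) f).eval₂ (h.comp C) X) := by
  have hdvd : X ^ (k + 1) ∣ f - (trunc (k + 1) f : A⟦X⟧) := by
    refine X_pow_dvd_iff.2 fun m hm => ?_
    rw [map_sub, coeff_coe_trunc_of_lt hm, sub_self]
  have hdvd' : X ^ (k + 1) ∣ h f - (trunc (k + 1) f).eval₂ (h.comp C) X := by
    have hcoe : h (trunc (k + 1) f) = (trunc (k + 1) f).eval₂ (h.comp C) (h X) := by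
      rw [← Polynomial.eval₂_C_X_eq_coe, Polynomial.hom_eval₂]
    simpa [hcoe, hX] using map_dvd h hdvd
  rw [← sub_eq_zero, ← map_sub]
  exact X_pow_dvd_iff.1 hdvd' k k.lt_succ_self

theorem ringHom_ext_of_map_X {h₁ h₂ : A⟦X⟧ →+* B⟦X⟧} (hC : h₁.comp C = h₂.comp C)
    (h₁X : h₁ X = X) (h₂X : h₂ X = X) : h₁ = h₂ := by
  ext f k
  rw [coeff_apply_eq_coeff_eval₂_trunc_of_map_X h₁X,
    coeff_apply_eq_coeff_eval₂_trunc_of_map_X h₂X, hC]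

theorem constantCoeff_apply_eq_of_map_X {h : A⟦X⟧ →+* B⟦X⟧} (hX : h X = X) (f : A⟦X⟧) :
    constantCoeff (h f) = constantCoeff (h (C (constantCoeff f))) := by
  simpa [trunc_one_left] using coeff_apply_eq_coeff_eval₂_trunc_of_map_X hX f 0

theorem mk_span_X_eq_mk_iff {a b : B⟦X⟧} :
    Ideal.Quotient.mk (Ideal.span {X}) a = Ideal.Quotient.mk (Ideal.span {X}) b ↔
      constantCoeff a = constantCoeff b := by
  rw [Ideal.Quotient.eq, Ideal.mem_span_singleton, X_dvd_iff, map_sub, sub_eq_zero]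

end PowerSeries

/-- Let `R` be a formally étale algebra over a commutative ring `S`, and
let `γ` be a ring endomorphism of `S[[X]]` with `γ(X) = X` which induces the identity on
`S[[X]]/(X) ≅ S`. Let `ι : S[[X]] → R[[X]]` be the coefficientwise map induced by `S → R`.
Then there is a unique ring endomorphism `γ̃` of `R[[X]]` with `γ̃ ∘ ι = ι ∘ γ` inducing the
identity on `R[[X]]/(X) ≅ R`. -/
theorem formallyEtale_lift_powerSeries_endomorphism
    (S R : Type u) [CommRing S] [CommRing R] [Algebra S R] [Algebra.FormallyEtale S R]
    (γ : PowerSeries S →+* PowerSeries S)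
    (hX : γ PowerSeries.X = PowerSeries.X)
    (hconst : ∀ f : PowerSeries S,
      PowerSeries.constantCoeff (R := S) (γ f) = PowerSeries.constantCoeff (R := S) f) :
    ∃! γt : PowerSeries R →+* PowerSeries R,
      γt.comp (PowerSeries.map (algebraMap S R)) =
        (PowerSeries.map (algebraMap S R)).comp γ ∧
      ∀ f : PowerSeries R,
        PowerSeries.constantCoeff (R := R) (γt f) = PowerSeries.constantCoeff (R := R) f := by
  set ι := map (algebraMap S R)
  have hιX : ι X = X := map_X _
  have hιγX : ι (γ X) = X := by rw [hX, hιX]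
  obtain ⟨φ, ⟨hφS, hφ_mk⟩, hφ_unique⟩ :=
    Algebra.FormallyEtale.existsUnique_ringHom_lift_of_isAdicComplete (Ideal.span {X})
      (ι.comp (γ.comp C)) ((Ideal.Quotient.mk _).comp C) <| RingHom.ext fun s => by
        simp [mk_span_X_eq_mk_iff, ι, ← coeff_zero_eq_constantCoeff_apply, hconst]
  have hφ_const (r : R) : constantCoeff (φ r) = r := by
    simpa [mk_span_X_eq_mk_iff] using congr($hφ_mk r)
  obtain ⟨γt, rfl, hγtX⟩ := exists_ringHom_comp_C_eq_and_map_X φ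
  have hγt_const (f : R⟦X⟧) : constantCoeff (γt f) = constantCoeff f := by
    rw [constantCoeff_apply_eq_of_map_X hγtX]
    exact hφ_const _
  refine ⟨γt, ⟨ringHom_ext_of_map_X ?_ (by simp [hιX, hγtX]) (by simp [hιγX]), hγt_const⟩, ?_⟩
  · ext s : 1
    simpa [ι] using congr($hφS s)
  rintro γt' ⟨hγt'ι, hγt'_const⟩
  have hγt'X : γt' X = X := by simpa [hιX, hιγX] using congr($hγt'ι X)
  refine ringHom_ext_of_map_X (hφ_unique _ ⟨?_, ?_⟩) hγt'X hγtX
  · ext s : 1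
    simpa [ι] using congr($hγt'ι (C s))
  · ext r
    simp [mk_span_X_eq_mk_iff, hγt'_const]
end
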